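/- arXiv:math/9903047 — 6 statements merged into one kernel-verified Lean document; each statement's English description precedes it below -/
import Mathlib

section
/- For every nonzero integer k one has ∫₂³ e^{2kt} dt ≤ e^{−2} · (∫₁² e^{2kt} dt + ∫₃⁴ e^{2kt} dt). -/
open Real intervalIntegral

lemma key (c : ℝ) (hc : Real.exp c ≤ Real.exp (-2) + Real.exp (c + c) * Real.exp (-2)) (t : ℝ) :
    Real.exp (c * (t + 1)) ≤ Real.exp (-2) * (Real.exp (c * t) + Real.exp (c * (t + 2))) := by
  have h1 : c * (t + 1) = c * t + c := by ring
  have h2 : c * (t + 2) = c * t + (c + c) := by ring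
  rw [h1, h2, Real.exp_add, Real.exp_add]
  calc Real.exp (c * t) * Real.exp c
      ≤ Real.exp (c * t) * (Real.exp (-2) + Real.exp (c + c) * Real.exp (-2)) := by
        exact mul_le_mul_of_nonneg_left hc (Real.exp_nonneg _)
    _ = Real.exp (-2) * (Real.exp (c * t) + Real.exp (c * t) * Real.exp (c + c)) := by ring

/-- for every nonzero integer `k`,
`∫₂³ e^{2kt} dt ≤ e^{-2} (∫₁² e^{2kt} dt + ∫₃⁴ e^{2kt} dt)`. -/
theorem stmt3 (k : ℤ) (hk : k ≠ 0) :
    (∫ t in (2 : ℝ)..3, Real.exp (2 * (k : ℝ) * t)) ≤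
      Real.exp (-2) *
        ((∫ t in (1 : ℝ)..2, Real.exp (2 * (k : ℝ) * t)) +
          ∫ t in (3 : ℝ)..4, Real.exp (2 * (k : ℝ) * t)) := by
  set c : ℝ := 2 * (k : ℝ) with hc
  have hcont : ∀ d : ℝ, Continuous fun t : ℝ => Real.exp (c * (t + d)) := fun d => by
    fun_prop
  have hint : ∀ d : ℝ, IntervalIntegrable (fun t : ℝ => Real.exp (c * (t + d)))
      MeasureTheory.volume 1 2 := fun d => (hcont d).intervalIntegrable _ _
  have e1 : (∫ t in (2 : ℝ)..3, Real.exp (c * t)) =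
      ∫ t in (1 : ℝ)..2, Real.exp (c * (t + 1)) := by
    rw [intervalIntegral.integral_comp_add_right (fun t => Real.exp (c * t)) 1]
    norm_num
  have e2 : (∫ t in (3 : ℝ)..4, Real.exp (c * t)) =
      ∫ t in (1 : ℝ)..2, Real.exp (c * (t + 2)) := by
    rw [intervalIntegral.integral_comp_add_right (fun t => Real.exp (c * t)) 2]
    norm_num
  have e0 : (∫ t in (1 : ℝ)..2, Real.exp (c * t)) =
      ∫ t in (1 : ℝ)..2, Real.exp (c * (t + 0)) := by simp
  rw [e1, e2, e0, ← intervalIntegral.integral_add (hint 0) (hint 2),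
    ← intervalIntegral.integral_const_mul]
  have hkey : Real.exp c ≤ Real.exp (-2) + Real.exp (c + c) * Real.exp (-2) := by
    rcases lt_or_gt_of_ne hk with h | h
    · have hk1 : (k : ℝ) ≤ -1 := by exact_mod_cast (by omega : k ≤ -1)
      have : Real.exp c ≤ Real.exp (-2) :=
        Real.exp_le_exp.mpr (by simp only [hc]; linarith)
      linarith [mul_nonneg (Real.exp_nonneg (c + c)) (Real.exp_nonneg (-2))]
    · have hk1 : (1 : ℝ) ≤ (k : ℝ) := by exact_mod_cast h
      have : Real.exp c ≤ Real.exp (c + c) * Real.exp (-2) := by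
        rw [← Real.exp_add]
        exact Real.exp_le_exp.mpr (by simp only [hc]; linarith)
      linarith [Real.exp_nonneg (-2)]
  apply intervalIntegral.integral_mono_on (by norm_num) (hint 1)
    (((hint 0).add (hint 2)).const_mul _)
  intro t _
  simpa using key c hkey t
end

section
/- Let γ ∈ (0,1) and let λ > 1 satisfy λ = (γ/2)(λ² + 1). Let l ≥ 3 be an integer and let y₂, y₃, …, y_{l−1} be nonnegative real numbers such that y_k ≤ (γ/2)(y_{k−1} + y_{k+1}) for every integer k with 2 < k < l−1. Then for every integer k with 2 ≤ k ≤ l−1 one has y_k ≤ λ^{−(k−2)} · y₂ + λ^{−(l−1−k)} · y_{l−1}. -/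
/-- the discrete maximum-principle lemma: if `γ ∈ (0,1)`, `λ > 1`
satisfies `λ = (γ/2)(λ² + 1)`, and nonnegative reals `y₂, …, y_{l-1}` satisfy
`y_k ≤ (γ/2)(y_{k-1} + y_{k+1})` for `2 < k < l-1`, then
`y_k ≤ λ^{-(k-2)} y₂ + λ^{-(l-1-k)} y_{l-1}` for all `2 ≤ k ≤ l-1`. -/
theorem stmt4 (γ lam : ℝ) (hγ0 : 0 < γ) (hγ1 : γ < 1) (hlam : 1 < lam)
    (heq : lam = γ / 2 * (lam ^ 2 + 1)) (l : ℕ) (hl : 3 ≤ l) (y : ℕ → ℝ)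
    (hynn : ∀ k, 2 ≤ k → k ≤ l - 1 → 0 ≤ y k)
    (hrec : ∀ k, 2 < k → k < l - 1 → y k ≤ γ / 2 * (y (k - 1) + y (k + 1))) :
    ∀ k, 2 ≤ k → k ≤ l - 1 →
      y k ≤ lam ^ (-((k : ℤ) - 2)) * y 2 + lam ^ (-((l : ℤ) - 1 - (k : ℤ))) * y (l - 1) := by
  have hlam0 : (0:ℝ) < lam := lt_trans one_pos hlam
  have hlamne : lam ≠ 0 := ne_of_gt hlam0
  -- key identity for the barrier
  have key : ∀ n : ℤ, γ / 2 * (lam ^ (n + 1) + lam ^ (n - 1)) = lam ^ n := by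
    intro n
    have h1 : lam ^ (n + 1) = lam ^ (n - 1) * lam ^ 2 := by
      rw [show n + 1 = (n - 1) + 2 by ring, zpow_add₀ hlamne, zpow_two, sq]
    have h2 : lam ^ n = lam ^ (n - 1) * lam := by
      rw [zpow_sub_one₀ hlamne]
      field_simp
    calc γ / 2 * (lam ^ (n + 1) + lam ^ (n - 1))
        = lam ^ (n - 1) * (γ / 2 * (lam ^ 2 + 1)) := by rw [h1]; ring
      _ = lam ^ (n - 1) * lam := by rw [← heq]
      _ = lam ^ n := h2.symm
  set g : ℕ → ℝ := fun k =>
    lam ^ (-((k : ℤ) - 2)) * y 2 + lam ^ (-((l : ℤ) - 1 - (k : ℤ))) * y (l - 1) with hg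
  have hy2 : 0 ≤ y 2 := hynn 2 le_rfl (by omega)
  have hyl : 0 ≤ y (l - 1) := hynn (l - 1) (by omega) le_rfl
  have hb2 : y 2 - g 2 ≤ 0 := by
    have : g 2 = y 2 + lam ^ (-((l : ℤ) - 3)) * y (l - 1) := by
      simp only [hg, Nat.cast_ofNat]
      rw [show -((2:ℤ) - 2) = 0 by ring, zpow_zero, one_mul,
        show -((l:ℤ) - 1 - 2) = -((l:ℤ) - 3) by ring]
    rw [this]
    have := mul_nonneg (le_of_lt (zpow_pos hlam0 (-((l : ℤ) - 3)))) hyl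
    linarith
  have hbl : y (l - 1) - g (l - 1) ≤ 0 := by
    have hc : ((l - 1 : ℕ) : ℤ) = (l : ℤ) - 1 := by omega
    have : g (l - 1) = lam ^ (-((l : ℤ) - 3)) * y 2 + y (l - 1) := by
      simp only [hg, hc]
      rw [show -((l:ℤ) - 1 - 2) = -((l:ℤ) - 3) by ring,
        show -((l:ℤ) - 1 - ((l:ℤ) - 1)) = 0 by ring, zpow_zero, one_mul]
    rw [this]
    have := mul_nonneg (le_of_lt (zpow_pos hlam0 (-((l : ℤ) - 3)))) hy2
    linarith
  -- interior identity for g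
  have hgrec : ∀ k : ℕ, 2 < k → k < l - 1 → g k = γ / 2 * (g (k - 1) + g (k + 1)) := by
    intro k hk2 hkl
    have hc1 : ((k - 1 : ℕ) : ℤ) = (k : ℤ) - 1 := by omega
    simp only [hg, hc1, Nat.cast_add, Nat.cast_one]
    have e1 := key (2 - (k : ℤ))
    have e2 := key ((k : ℤ) - ((l : ℤ) - 1))
    have r1 : -(((k : ℤ) - 1) - 2) = (2 - (k : ℤ)) + 1 := by ring
    have r2 : -(((k : ℤ) + 1) - 2) = (2 - (k : ℤ)) - 1 := by ring
    have r3 : -((l : ℤ) - 1 - ((k : ℤ) - 1)) = ((k : ℤ) - ((l : ℤ) - 1)) - 1 := by ring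
    have r4 : -((l : ℤ) - 1 - ((k : ℤ) + 1)) = ((k : ℤ) - ((l : ℤ) - 1)) + 1 := by ring
    have r5 : -((k : ℤ) - 2) = 2 - (k : ℤ) := by ring
    have r6 : -((l : ℤ) - 1 - (k : ℤ)) = (k : ℤ) - ((l : ℤ) - 1) := by ring
    rw [r1, r2, r3, r4, r5, r6, ← e1, ← e2]
    ring
  -- maximize y - g over Icc 2 (l-1)
  have hne : (Finset.Icc 2 (l - 1)).Nonempty := by
    refine ⟨2, ?_⟩; simp [Finset.mem_Icc]; omega
  obtain ⟨k₀, hk₀mem, hk₀max⟩ :=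
    Finset.exists_max_image (Finset.Icc 2 (l - 1)) (fun k => y k - g k) hne
  rw [Finset.mem_Icc] at hk₀mem
  have hM : y k₀ - g k₀ ≤ 0 := by
    rcases eq_or_lt_of_le hk₀mem.1 with h2 | h2
    · rw [← h2]; exact hb2
    rcases eq_or_lt_of_le hk₀mem.2 with hL | hL
    · rw [hL]; exact hbl
    · have hy := hrec k₀ h2 hL
      have hgeq := hgrec k₀ h2 hL
      have hm1 : y (k₀ - 1) - g (k₀ - 1) ≤ y k₀ - g k₀ := by
        apply hk₀max; rw [Finset.mem_Icc]; omega
      have hp1 : y (k₀ + 1) - g (k₀ + 1) ≤ y k₀ - g k₀ := by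
        apply hk₀max; rw [Finset.mem_Icc]; omega
      have hsum := add_le_add hm1 hp1
      have hmul := mul_le_mul_of_nonneg_left hsum (by linarith : (0:ℝ) ≤ γ / 2)
      by_contra hpos
      push_neg at hpos
      have h1 : y k₀ - g k₀ ≤ γ / 2 * (y (k₀ - 1) - g (k₀ - 1) + (y (k₀ + 1) - g (k₀ + 1))) := by
        have hr : γ / 2 * (y (k₀ - 1) - g (k₀ - 1) + (y (k₀ + 1) - g (k₀ + 1)))
            = γ / 2 * (y (k₀ - 1) + y (k₀ + 1)) - γ / 2 * (g (k₀ - 1) + g (k₀ + 1)) := by ring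
        rw [hr, ← hgeq]
        linarith
      have h2 : γ / 2 * (y k₀ - g k₀ + (y k₀ - g k₀)) = γ * (y k₀ - g k₀) := by ring
      have h3 : y k₀ - g k₀ ≤ γ * (y k₀ - g k₀) := le_trans h1 (h2 ▸ hmul)
      have h4 := mul_pos (by linarith : (0:ℝ) < 1 - γ) hpos
      have h5 : (1 - γ) * (y k₀ - g k₀) = (y k₀ - g k₀) - γ * (y k₀ - g k₀) := by ring
      linarith
  intro k hk2 hkl
  have hk : y k - g k ≤ y k₀ - g k₀ := by
    apply hk₀max; rw [Finset.mem_Icc]; exact ⟨hk2, hkl⟩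
  have : y k - g k ≤ 0 := le_trans hk hM
  simpa [hg] using this
end

section
/- Let λ := (e² + √(e⁴ − 4))/2, the unique root greater than 1 of the equation λ = e^{−2}(λ² + 1). Let n ≥ 1, let l ≥ 3 be an integer, and let u : {z ∈ ℂ : e^{−l} < |z| < 1} → ℂⁿ be a holomorphic map whose energies E_k(u) are finite for all 0 ≤ k ≤ l−1. Then for every integer k with 1 ≤ k ≤ l−2 one has E_k(u) ≤ λ^{−(k−1)} · E₁(u) + λ^{−(l−2−k)} · E_{l−2}(u). -/
open MeasureTheory Complex ENNReal

/-- The annulus `A_k = {z : e^{-(k+1)} < |z| < e^{-k}}`. -/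
def annulusAk (k : ℕ) : Set ℂ :=
  {z : ℂ | Real.exp (-((k : ℝ) + 1)) < ‖z‖ ∧ ‖z‖ < Real.exp (-(k : ℝ))}

/-- The energy `E_k(u) = ∫_{A_k} ‖u'‖² dA` of a map `u : ℂ → ℂⁿ` on the annulus `A_k`. -/
noncomputable def annEnergy (n : ℕ) (u : ℂ → EuclideanSpace ℂ (Fin n)) (k : ℕ) : ℝ≥0∞ :=
  ∫⁻ z in annulusAk k, (‖deriv u z‖₊ : ℝ≥0∞) ^ 2

/-- `λ = (e² + √(e⁴ - 4))/2`, the root `> 1` of `λ = e^{-2}(λ² + 1)`. -/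
noncomputable def lamConst : ℝ := (Real.exp 2 + Real.sqrt (Real.exp 4 - 4)) / 2

/-!
Each coordinate `g` of `u'` is holomorphic on the annulus and has a primitive there, so its Laurent
coefficient `c₋₁` vanishes. Parseval's identity on the circles `|z| = r`, integrated in polar
coordinates, writes the energy of `g` on `A_k` as `∑ₙ 2π |cₙ|² ∫ r^(2n+1) dr` over
`e^{-(k+1)} < r < e^{-k}`, and rescaling `r` shows that this radial integral is `q^k` times the one
on `A_0`, with `q = e^{-2(n+1)}`. For `n ≠ -1` either `q ≤ e^{-2} ≤ λ⁻¹` or `q ≥ e² ≥ λ`, so every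
mode decays geometrically away from `A_1` or away from `A_{l-2}`, and summing over the modes gives
the estimate.
-/

open Set Metric Real

def openAnnulus (R₁ R₂ : ℝ) : Set ℂ := {z : ℂ | R₁ < ‖z‖ ∧ ‖z‖ < R₂}

noncomputable def laurentCoeff (g : ℂ → ℂ) (r : ℝ) (n : ℤ) : ℂ :=
  (2 * π * I)⁻¹ * ∮ z in C(0, r), z ^ (-n - 1) * g z

section Annulus

variable {g : ℂ → ℂ} {R₁ R₂ : ℝ}

lemma isOpen_openAnnulus (R₁ R₂ : ℝ) : IsOpen (openAnnulus R₁ R₂) :=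
  (isOpen_lt continuous_const continuous_norm).inter (isOpen_lt continuous_norm continuous_const)

lemma zero_notMem_openAnnulus (hR₁ : 0 ≤ R₁) : (0 : ℂ) ∉ openAnnulus R₁ R₂ :=
  fun h => (hR₁.trans_lt h.1).ne' norm_zero

lemma openAnnulus_subset_openAnnulus {ρ₁ ρ₂ : ℝ} (h₁ : R₁ ≤ ρ₁) (h₂ : ρ₂ ≤ R₂) :
    openAnnulus ρ₁ ρ₂ ⊆ openAnnulus R₁ R₂ :=
  fun _ hz => ⟨h₁.trans_lt hz.1, hz.2.trans_le h₂⟩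

lemma circleMap_mem_openAnnulus (hR₁ : 0 ≤ R₁) {r : ℝ} (hr : r ∈ Ioo R₁ R₂) (θ : ℝ) :
    circleMap 0 r θ ∈ openAnnulus R₁ R₂ := by
  simpa [openAnnulus, abs_of_pos (hR₁.trans_lt hr.1)] using hr

lemma DifferentiableOn.zpow_mul (hR₁ : 0 ≤ R₁)
    (hg : DifferentiableOn ℂ g (openAnnulus R₁ R₂)) (m : ℤ) :
    DifferentiableOn ℂ (fun z => z ^ m * g z) (openAnnulus R₁ R₂) :=
  (differentiableOn_zpow m _ (Or.inl (zero_notMem_openAnnulus hR₁))).mul hg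

lemma laurentCoeff_eq_of_le (hR₁ : 0 ≤ R₁) (hg : DifferentiableOn ℂ g (openAnnulus R₁ R₂))
    {r s : ℝ} (hr : r ∈ Ioo R₁ R₂) (hs : s ∈ Ioo R₁ R₂) (hrs : r ≤ s) (n : ℤ) :
    laurentCoeff g r n = laurentCoeff g s n := by
  have hF := hg.zpow_mul hR₁ (-n - 1)
  have hsub : closedBall 0 s \ ball 0 r ⊆ openAnnulus R₁ R₂ := fun z hz => by
    simp only [mem_sdiff, mem_closedBall, mem_ball, dist_zero_right, not_lt] at hz
    exact ⟨hr.1.trans_le hz.2, hz.1.trans_lt hs.2⟩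
  rw [laurentCoeff, laurentCoeff,
    circleIntegral_eq_of_differentiable_on_annulus_off_countable (hR₁.trans_lt hr.1) hrs
      countable_empty (hF.continuousOn.mono hsub) fun z hz => hF.differentiableAt
        ((isOpen_openAnnulus R₁ R₂).mem_nhds
          (hsub (sdiff_subset_sdiff ball_subset_closedBall ball_subset_closedBall hz.1)))]

lemma laurentCoeff_eq (hR₁ : 0 ≤ R₁) (hg : DifferentiableOn ℂ g (openAnnulus R₁ R₂))
    {r s : ℝ} (hr : r ∈ Ioo R₁ R₂) (hs : s ∈ Ioo R₁ R₂) (n : ℤ) :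
    laurentCoeff g r n = laurentCoeff g s n := by
  rcases le_total r s with hrs | hsr
  · exact laurentCoeff_eq_of_le hR₁ hg hr hs hrs n
  · exact (laurentCoeff_eq_of_le hR₁ hg hs hr hsr n).symm

lemma laurentCoeff_neg_one_eq_zero {f : ℂ → ℂ} {r : ℝ} (hr : 0 ≤ r)
    (hf : ∀ z ∈ sphere (0 : ℂ) r, HasDerivAt f (g z) z) : laurentCoeff g r (-1) = 0 := by
  simp [laurentCoeff,
    circleIntegral.integral_eq_zero_of_hasDerivWithinAt hr fun z hz => (hf z hz).hasDerivWithinAt]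

lemma fourier_neg_coe_eq_exp_zpow (n : ℤ) (θ : ℝ) :
    fourier (-n) (θ : AddCircle (π - -π)) = cexp (θ * I) ^ (-n) := by
  rw [fourier_coe_apply, ← Complex.exp_int_mul]
  congr 1
  push_cast
  field_simp
  ring

lemma fourierCoeffOn_circleMap {r : ℝ} (hr : r ≠ 0) (n : ℤ) :
    fourierCoeffOn (neg_lt_self pi_pos) (fun θ => g (circleMap 0 r θ)) n
      = r ^ n * laurentCoeff g r n := by
  have hT : π - -π = 2 * π := by ring
  have hper : Function.Periodic
      (fun θ : ℝ => fourier (-n) (θ : AddCircle (π - -π)) • g (circleMap 0 r θ)) (π - -π) := by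
    intro θ
    simp only [AddCircle.coe_add_period]
    rw [hT, periodic_circleMap 0 r θ]
  have hshift : (∫ θ in -π..π, fourier (-n) (θ : AddCircle (π - -π)) • g (circleMap 0 r θ))
      = ∫ θ in 0..2 * π, fourier (-n) (θ : AddCircle (π - -π)) • g (circleMap 0 r θ) := by
    convert hper.intervalIntegral_add_eq (-π) 0 using 2 <;> ring
  rw [fourierCoeffOn_eq_integral, hshift, ← intervalIntegral.integral_smul, laurentCoeff,
    circleIntegral, ← intervalIntegral.integral_const_mul, ← intervalIntegral.integral_const_mul]
  refine intervalIntegral.integral_congr fun θ _ => ?_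
  have hw : circleMap 0 r θ ≠ 0 := circleMap_ne_center hr
  have hzpow : circleMap 0 r θ * circleMap 0 r θ ^ (-n - 1)
      = (r : ℂ) ^ (-n) * cexp (θ * I) ^ (-n) := by
    rw [mul_comm, ← zpow_add_one₀ hw, sub_add_cancel, circleMap_zero, mul_zpow]
  have hrn : (r : ℂ) ^ n ≠ 0 := zpow_ne_zero n (ofReal_ne_zero.mpr hr)
  rw [deriv_circleMap, fourier_neg_coe_eq_exp_zpow, Complex.real_smul, smul_eq_mul, smul_eq_mul,
    show circleMap 0 r θ * I * (circleMap 0 r θ ^ (-n - 1) * g (circleMap 0 r θ))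
      = I * (circleMap 0 r θ * circleMap 0 r θ ^ (-n - 1)) * g (circleMap 0 r θ) by ring,
    hzpow, zpow_neg (r : ℂ) n]
  push_cast
  field_simp
  ring

lemma hasSum_laurentCoeff_sq (hR₁ : 0 ≤ R₁) (hg : DifferentiableOn ℂ g (openAnnulus R₁ R₂))
    {r r₀ : ℝ} (hr : r ∈ Ioo R₁ R₂) (hr₀ : r₀ ∈ Ioo R₁ R₂) :
    HasSum (fun n : ℤ => 2 * π * ‖laurentCoeff g r₀ n‖ ^ 2 * r ^ (2 * n))
      (∫ θ in -π..π, ‖g (circleMap 0 r θ)‖ ^ 2) := by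
  have hr0 : 0 < r := hR₁.trans_lt hr.1
  have hc : Continuous fun θ => g (circleMap 0 r θ) :=
    hg.continuousOn.comp_continuous (continuous_circleMap 0 r) (circleMap_mem_openAnnulus hR₁ hr)
  have hL2 : MemLp (fun θ => g (circleMap 0 r θ)) 2 (volume.restrict (Ioc (-π) π)) :=
    (memLp_two_iff_integrable_sq_norm hc.aestronglyMeasurable).2
      ((hc.norm.pow 2).integrableOn_Icc.mono_set Ioc_subset_Icc_self)
  have h := (hasSum_sq_fourierCoeffOn (neg_lt_self pi_pos) hL2).mul_left (2 * π)
  rw [smul_eq_mul, sub_neg_eq_add, ← two_mul, ← mul_assoc, mul_inv_cancel₀ two_pi_pos.ne',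
    one_mul] at h
  refine h.congr_fun fun n => ?_
  rw [fourierCoeffOn_circleMap hr0.ne', laurentCoeff_eq hR₁ hg hr hr₀, norm_mul, norm_zpow,
    norm_real, norm_of_nonneg hr0.le, mul_pow, mul_comm 2 n, zpow_mul, zpow_two, sq]
  ring

lemma lintegral_circleMap_sq_eq_tsum (hR₁ : 0 ≤ R₁)
    (hg : DifferentiableOn ℂ g (openAnnulus R₁ R₂)) {r r₀ : ℝ} (hr : r ∈ Ioo R₁ R₂)
    (hr₀ : r₀ ∈ Ioo R₁ R₂) :
    ∫⁻ θ in Ioo (-π) π, ‖g (circleMap 0 r θ)‖ₑ ^ 2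
      = ∑' n : ℤ, ENNReal.ofReal (2 * π * ‖laurentCoeff g r₀ n‖ ^ 2 * r ^ (2 * n)) := by
  have hr0 : 0 < r := hR₁.trans_lt hr.1
  have h := hasSum_laurentCoeff_sq hR₁ hg hr hr₀
  have hc : Continuous fun θ => ‖g (circleMap 0 r θ)‖ ^ 2 :=
    ((hg.continuousOn.comp_continuous (continuous_circleMap 0 r)
      (circleMap_mem_openAnnulus hR₁ hr)).norm).pow 2
  rw [← ENNReal.ofReal_tsum_of_nonneg (fun n => by positivity) h.summable, h.tsum_eq,
    intervalIntegral.integral_of_le (neg_le_self pi_pos.le), integral_Ioc_eq_integral_Ioo,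
    ofReal_integral_eq_lintegral_ofReal (hc.integrableOn_Icc.mono_set Ioo_subset_Icc_self)
      (ae_of_all _ fun _ => sq_nonneg _)]
  simp only [ofReal_pow (norm_nonneg _), ofReal_norm]

lemma lintegral_openAnnulus_eq_lintegral_circleMap {F : ℂ → ℝ≥0∞} {ρ₁ ρ₂ : ℝ} (hρ₁ : 0 ≤ ρ₁)
    (hF : ContinuousOn F (openAnnulus ρ₁ ρ₂)) :
    ∫⁻ z in openAnnulus ρ₁ ρ₂, F z
      = ∫⁻ r in Ioo ρ₁ ρ₂, ENNReal.ofReal r * ∫⁻ θ in Ioo (-π) π, F (circleMap 0 r θ) := by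
  set S := Ioo ρ₁ ρ₂ ×ˢ Ioo (-π) π
  have hS : MeasurableSet S := measurableSet_Ioo.prod measurableSet_Ioo
  have hcircle : Continuous fun p : ℝ × ℝ => circleMap 0 p.1 p.2 := by
    simp only [circleMap_zero]
    fun_prop
  have hpolar : ∀ p ∈ _root_.polarCoord.target,
      ENNReal.ofReal p.1 • (openAnnulus ρ₁ ρ₂).indicator F (Complex.polarCoord.symm p)
        = S.indicator (fun p => ENNReal.ofReal p.1 * F (circleMap 0 p.1 p.2)) p := by
    rintro ⟨r, θ⟩ ⟨hr : 0 < r, hθ⟩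
    by_cases hrS : r ∈ Ioo ρ₁ ρ₂
    · rw [indicator_of_mem (by simpa [openAnnulus, abs_of_pos hr] using hrS),
        indicator_of_mem (show (r, θ) ∈ S from ⟨hrS, hθ⟩),
        smul_eq_mul, Complex.polarCoord_symm_apply, circleMap_zero, exp_mul_I, ← ofReal_cos,
        ← ofReal_sin]
    · rw [indicator_of_notMem (by simpa [openAnnulus, abs_of_pos hr] using hrS),
        indicator_of_notMem fun h => hrS h.1, smul_zero]
  have hFS : AEMeasurable (fun p : ℝ × ℝ => ENNReal.ofReal p.1 * F (circleMap 0 p.1 p.2))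
      ((volume.restrict (Ioo ρ₁ ρ₂)).prod (volume.restrict (Ioo (-π) π))) := by
    rw [Measure.prod_restrict, ← Measure.volume_eq_prod]
    exact measurable_fst.ennreal_ofReal.aemeasurable.mul
      ((hF.comp hcircle.continuousOn fun p hp =>
        circleMap_mem_openAnnulus hρ₁ hp.1 p.2).aemeasurable hS)
  rw [← lintegral_indicator (isOpen_openAnnulus ρ₁ ρ₂).measurableSet,
    ← Complex.lintegral_comp_polarCoord_symm,
    setLIntegral_congr_fun _root_.polarCoord.open_target.measurableSet hpolar,
    lintegral_indicator hS, Measure.restrict_restrict hS,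
    inter_eq_self_of_subset_left (show S ⊆ _root_.polarCoord.target from
      fun p hp => ⟨hρ₁.trans_lt hp.1.1, hp.2⟩),
    Measure.volume_eq_prod, ← Measure.prod_restrict, lintegral_prod _ hFS]
  exact lintegral_congr fun r => lintegral_const_mul' _ _ ofReal_ne_top

lemma ofReal_integral_zpow_eq_lintegral {ρ₁ ρ₂ : ℝ} (hρ₁ : 0 < ρ₁) (hρ : ρ₁ ≤ ρ₂) {C : ℝ}
    (hC : 0 ≤ C) (m : ℤ) :
    ENNReal.ofReal (C * ∫ r in ρ₁..ρ₂, r ^ m) = ∫⁻ r in Ioo ρ₁ ρ₂, ENNReal.ofReal (C * r ^ m) := by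
  have hcont : ContinuousOn (fun r : ℝ => C * r ^ m) (Icc ρ₁ ρ₂) :=
    continuousOn_const.mul (continuousOn_id.zpow₀ m fun r hr => Or.inl (hρ₁.trans_le hr.1).ne')
  rw [← intervalIntegral.integral_const_mul, intervalIntegral.integral_of_le hρ,
    integral_Ioc_eq_integral_Ioo,
    ofReal_integral_eq_lintegral_ofReal (hcont.integrableOn_Icc.mono_set Ioo_subset_Icc_self)]
  filter_upwards [ae_restrict_mem measurableSet_Ioo] with r hr
  have := hρ₁.trans hr.1
  positivity

theorem lintegral_openAnnulus_sq_eq_tsum {ρ₁ ρ₂ r₀ : ℝ} (hR₁ : 0 < R₁)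
    (hg : DifferentiableOn ℂ g (openAnnulus R₁ R₂)) (hρ₁ : R₁ ≤ ρ₁) (hρ₂ : ρ₂ ≤ R₂)
    (hρ : ρ₁ ≤ ρ₂) (hr₀ : r₀ ∈ Ioo R₁ R₂) :
    ∫⁻ z in openAnnulus ρ₁ ρ₂, ‖g z‖ₑ ^ 2
      = ∑' n : ℤ, ENNReal.ofReal
          (2 * π * ‖laurentCoeff g r₀ n‖ ^ 2 * ∫ r in ρ₁..ρ₂, r ^ (2 * n + 1)) := by
  have hF : ContinuousOn (fun z => ‖g z‖ₑ ^ 2) (openAnnulus ρ₁ ρ₂) :=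
    (ENNReal.continuous_pow 2).comp_continuousOn
      (hg.continuousOn.mono (openAnnulus_subset_openAnnulus hρ₁ hρ₂)).enorm
  have hcircle : ∀ r ∈ Ioo ρ₁ ρ₂,
      ENNReal.ofReal r * ∫⁻ θ in Ioo (-π) π, ‖g (circleMap 0 r θ)‖ₑ ^ 2
        = ∑' n : ℤ, ENNReal.ofReal (2 * π * ‖laurentCoeff g r₀ n‖ ^ 2 * r ^ (2 * n + 1)) := by
    intro r hr
    have hr0 : 0 < r := (hR₁.trans_le hρ₁).trans hr.1
    rw [lintegral_circleMap_sq_eq_tsum hR₁.le hg ⟨hρ₁.trans_lt hr.1, hr.2.trans_le hρ₂⟩ hr₀,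
      ← ENNReal.tsum_mul_left]
    refine tsum_congr fun n => ?_
    rw [← ofReal_mul hr0.le, zpow_add_one₀ hr0.ne']
    ring_nf
  rw [lintegral_openAnnulus_eq_lintegral_circleMap (hR₁.le.trans hρ₁) hF,
    setLIntegral_congr_fun measurableSet_Ioo hcircle, lintegral_tsum fun n => by fun_prop]
  exact tsum_congr fun n =>
    (ofReal_integral_zpow_eq_lintegral (hR₁.trans_le hρ₁) hρ (by positivity) _).symm

end Annulus

lemma integral_zpow_mul_left {a b c : ℝ} (hc : c ≠ 0) (m : ℤ) :
    ∫ r in c * a..c * b, r ^ m = c ^ (m + 1) * ∫ r in a..b, r ^ m := by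
  have h := intervalIntegral.integral_comp_mul_left (fun r => r ^ m) hc (a := a) (b := b)
  simp only [mul_zpow, intervalIntegral.integral_const_mul, smul_eq_mul] at h
  rw [zpow_add_one₀ hc, mul_comm _ c, mul_assoc, h, ← mul_assoc, mul_inv_cancel₀ hc, one_mul]

lemma integral_annulusAk_zpow (k : ℕ) (m : ℤ) :
    ∫ r in rexp (-((k : ℝ) + 1))..rexp (-(k : ℝ)), r ^ m
      = rexp (-(m + 1)) ^ k * ∫ r in rexp (-1)..1, r ^ m := by
  have h := integral_zpow_mul_left (a := rexp (-1)) (b := 1) (Real.exp_pos (-k)).ne' m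
  rw [mul_one, ← Real.exp_add] at h
  rw [neg_add, h, ← Real.rpow_intCast, ← Real.exp_mul, ← Real.exp_nat_mul]
  push_cast
  ring_nf

lemma pow_le_zpow_mul_add_zpow_mul {c q : ℝ} (hc : 0 < c) (hq : 0 < q) (hqc : q ≤ c⁻¹ ∨ c ≤ q)
    {k N : ℕ} (hk : 1 ≤ k) (hkN : k ≤ N) :
    q ^ k ≤ c ^ (-((k : ℤ) - 1)) * q + c ^ (-((N : ℤ) - k)) * q ^ N := by
  rcases hqc with hqc | hcq
  · obtain ⟨j, rfl⟩ : ∃ j, k = j + 1 := ⟨k - 1, by omega⟩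
    have : q ^ (j + 1) ≤ c ^ (-(((j + 1 : ℕ) : ℤ) - 1)) * q := by
      rw [pow_succ, show -(((j + 1 : ℕ) : ℤ) - 1) = -(j : ℤ) by push_cast; ring, zpow_neg,
        zpow_natCast, ← inv_pow]
      gcongr
    have : 0 ≤ c ^ (-((N : ℤ) - (j + 1 : ℕ))) * q ^ N := by positivity
    linarith
  · obtain ⟨j, rfl⟩ : ∃ j, N = k + j := ⟨N - k, by omega⟩
    have : q ^ k ≤ c ^ (-(((k + j : ℕ) : ℤ) - k)) * q ^ (k + j) := by
      rw [show -(((k + j : ℕ) : ℤ) - k) = -(j : ℤ) by push_cast; ring, zpow_neg, zpow_natCast,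
        pow_add, inv_mul_eq_div, le_div_iff₀ (by positivity)]
      gcongr
    have : 0 ≤ c ^ (-((k : ℤ) - 1)) * q := by positivity
    linarith

lemma exp_neg_two_mul_le_inv_or_le {c : ℝ} (hc : 0 < c) (hce : c ≤ rexp 2) {s : ℤ} (hs : s ≠ 0) :
    rexp (-(2 * s)) ≤ c⁻¹ ∨ c ≤ rexp (-(2 * s)) := by
  rcases hs.lt_or_gt with hs | hs
  · have : (s : ℝ) ≤ -1 := by exact_mod_cast Int.le_sub_one_of_lt hs
    exact Or.inr (hce.trans (Real.exp_le_exp.mpr (by linarith)))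
  · have : (1 : ℝ) ≤ s := by exact_mod_cast hs
    refine Or.inl ((Real.exp_le_exp.mpr (by linarith : -(2 * (s : ℝ)) ≤ -2)).trans ?_)
    rw [Real.exp_neg]
    exact inv_anti₀ hc hce

lemma lintegral_annulusAk_sq_eq_tsum {g : ℂ → ℂ} {L j : ℕ}
    (hg : DifferentiableOn ℂ g (openAnnulus (rexp (-L)) 1)) (hL : 1 < L) (hj : j < L) :
    ∫⁻ z in annulusAk j, ‖g z‖ₑ ^ 2
      = ∑' n : ℤ, ENNReal.ofReal (rexp (-(2 * (n + 1 : ℤ))) ^ j *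
          (2 * π * ‖laurentCoeff g (rexp (-1)) n‖ ^ 2 * ∫ r in rexp (-1)..1, r ^ (2 * n + 1))) := by
  rw [show annulusAk j = openAnnulus (rexp (-(j + 1))) (rexp (-j)) from rfl,
    lintegral_openAnnulus_sq_eq_tsum (r₀ := rexp (-1)) (Real.exp_pos _) hg
      (Real.exp_le_exp.mpr (by norm_cast; omega)) (Real.exp_le_one_iff.mpr (by simp))
      (Real.exp_le_exp.mpr (by linarith))
      ⟨Real.exp_lt_exp.mpr (by norm_cast; omega), Real.exp_lt_one_iff.mpr (by norm_num)⟩]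
  refine tsum_congr fun n => ?_
  rw [integral_annulusAk_zpow]
  push_cast
  ring_nf

theorem lintegral_annulusAk_sq_le {f g : ℂ → ℂ} {L N k : ℕ} {c : ℝ} (hc : 0 < c)
    (hce : c ≤ rexp 2) (hg : DifferentiableOn ℂ g (openAnnulus (rexp (-L)) 1))
    (hf : ∀ z ∈ openAnnulus (rexp (-L)) 1, HasDerivAt f (g z) z)
    (hk : 1 ≤ k) (hkN : k ≤ N) (hNL : N < L) :
    ∫⁻ z in annulusAk k, ‖g z‖ₑ ^ 2 ≤
      ENNReal.ofReal (c ^ (-((k : ℤ) - 1))) * (∫⁻ z in annulusAk 1, ‖g z‖ₑ ^ 2) +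
        ENNReal.ofReal (c ^ (-((N : ℤ) - k))) * ∫⁻ z in annulusAk N, ‖g z‖ₑ ^ 2 := by
  have hres : laurentCoeff g (rexp (-1)) (-1) = 0 := by
    refine laurentCoeff_neg_one_eq_zero (Real.exp_pos _).le fun z hz => hf z ?_
    rw [mem_sphere_zero_iff_norm] at hz
    exact ⟨hz ▸ Real.exp_lt_exp.mpr (by norm_cast; omega), hz ▸ Real.exp_lt_one_iff.mpr (by simp)⟩
  rw [lintegral_annulusAk_sq_eq_tsum hg (by omega) (by omega),
    lintegral_annulusAk_sq_eq_tsum hg (by omega) (by omega),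
    lintegral_annulusAk_sq_eq_tsum hg (by omega) hNL, ← ENNReal.tsum_mul_left,
    ← ENNReal.tsum_mul_left, ← ENNReal.tsum_add]
  refine ENNReal.tsum_le_tsum fun n => ?_
  rcases eq_or_ne n (-1) with rfl | hn
  · simp [hres]
  set w := 2 * π * ‖laurentCoeff g (rexp (-1)) n‖ ^ 2 * ∫ r in rexp (-1)..1, r ^ (2 * n + 1)
  have hw : 0 ≤ w := by
    refine mul_nonneg (by positivity) (intervalIntegral.integral_nonneg
      (Real.exp_le_one_iff.mpr (by norm_num)) fun r hr => ?_)
    have := (Real.exp_pos _).trans_le hr.1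
    positivity
  have hmode := pow_le_zpow_mul_add_zpow_mul hc (Real.exp_pos _)
    (exp_neg_two_mul_le_inv_or_le hc hce (s := n + 1) (by omega)) hk hkN
  rw [← ofReal_mul (by positivity), ← ofReal_mul (by positivity),
    ← ofReal_add (by positivity) (by positivity)]
  exact ofReal_le_ofReal (by nlinarith [mul_le_mul_of_nonneg_right hmode hw])

lemma lamConst_pos : 0 < lamConst := by
  unfold lamConst
  positivity

lemma lamConst_le_exp_two : lamConst ≤ rexp 2 := by
  have hsqrt : √(rexp 4 - 4) ≤ rexp 2 := by
    rw [Real.sqrt_le_iff, ← Real.exp_nat_mul]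
    norm_num
    positivity
  unfold lamConst
  linarith

lemma annEnergy_eq_sum_lintegral (n : ℕ) (u : ℂ → EuclideanSpace ℂ (Fin n)) (k : ℕ) :
    annEnergy n u k = ∑ j, ∫⁻ z in annulusAk k, ‖deriv u z j‖ₑ ^ 2 := by
  have hmeas : ∀ j, Measurable fun z => ‖deriv u z j‖ₑ ^ 2 := fun j =>
    ((EuclideanSpace.proj (𝕜 := ℂ) j).continuous.measurable.comp
      (measurable_deriv u)).enorm.pow_const 2
  rw [annEnergy, ← lintegral_finsetSum _ fun j _ => hmeas j]
  refine lintegral_congr fun z => ?_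
  rw [EuclideanSpace.nnnorm_eq, ← ENNReal.coe_pow, NNReal.sq_sqrt, ENNReal.ofNNReal_finsetSum]
  simp [enorm_eq_nnnorm]

theorem stmt5_general (n : ℕ) (l : ℕ)
    (u : ℂ → EuclideanSpace ℂ (Fin n))
    (hu : DifferentiableOn ℂ u
      {z : ℂ | Real.exp (-(l : ℝ)) < ‖z‖ ∧ ‖z‖ < 1}) :
    ∀ k, 1 ≤ k → k ≤ l - 2 →
      annEnergy n u k ≤
        ENNReal.ofReal (lamConst ^ (-((k : ℤ) - 1))) * annEnergy n u 1 +
          ENNReal.ofReal (lamConst ^ (-((l : ℤ) - 2 - (k : ℤ)))) * annEnergy n u (l - 2) := by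
  intro k hk hkl
  have hA := isOpen_openAnnulus (rexp (-l)) 1
  have hu' : DifferentiableOn ℂ u (openAnnulus (rexp (-l)) 1) := hu
  have hcomponent : ∀ j, ∫⁻ z in annulusAk k, ‖deriv u z j‖ₑ ^ 2 ≤
      ENNReal.ofReal (lamConst ^ (-((k : ℤ) - 1))) * (∫⁻ z in annulusAk 1, ‖deriv u z j‖ₑ ^ 2) +
        ENNReal.ofReal (lamConst ^ (-(((l - 2 : ℕ) : ℤ) - k))) *
          ∫⁻ z in annulusAk (l - 2), ‖deriv u z j‖ₑ ^ 2 := fun j =>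
    lintegral_annulusAk_sq_le (f := fun z => u z j) (L := l) lamConst_pos lamConst_le_exp_two
      ((EuclideanSpace.proj (𝕜 := ℂ) j).differentiable.comp_differentiableOn (hu'.deriv hA))
      (fun z hz => (EuclideanSpace.proj (𝕜 := ℂ) j).hasFDerivAt.comp_hasDerivAt z
        (hu'.differentiableAt (hA.mem_nhds hz)).hasDerivAt)
      hk hkl (by omega)
  rw [show (l : ℤ) - 2 = ((l - 2 : ℕ) : ℤ) by omega]
  simp only [annEnergy_eq_sum_lintegral, Finset.mul_sum, ← Finset.sum_add_distrib]
  exact Finset.sum_le_sum fun j _ => hcomponent j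

/-- geometric decay of annular energies of a holomorphic map of a
long annulus (Corollary 3.5 in the holomorphic model case). -/
theorem stmt5 (n : ℕ) (hn : 1 ≤ n) (l : ℕ) (hl : 3 ≤ l)
    (u : ℂ → EuclideanSpace ℂ (Fin n))
    (hu : DifferentiableOn ℂ u
      {z : ℂ | Real.exp (-(l : ℝ)) < ‖z‖ ∧ ‖z‖ < 1})
    (hfin : ∀ k, k ≤ l - 1 → annEnergy n u k ≠ ⊤) :
    ∀ k, 1 ≤ k → k ≤ l - 2 →
      annEnergy n u k ≤
        ENNReal.ofReal (lamConst ^ (-((k : ℤ) - 1))) * annEnergy n u 1 +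
          ENNReal.ofReal (lamConst ^ (-((l : ℤ) - 2 - (k : ℤ)))) * annEnergy n u (l - 2) :=
  stmt5_general n l u hu
end

section
/- Let n ≥ 1 and let W₀, W₁ ⊆ ℂⁿ be maximal totally real subspaces. Then there exists λ₁ > 0 such that for every C¹ map v : [0,1] → ℂⁿ with v(0) ∈ W₀ and v(1) ∈ W₁ there exists a vector w ∈ W₀ ∩ W₁ with λ₁ · ∫₀¹ ‖v(θ) − w‖² dθ ≤ ∫₀¹ ‖v′(θ)‖² dθ. -/
/-!
Take for `w` the orthogonal projection of `v 0` onto `W₀ ⊓ W₁`. Two subspaces meet at a positive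
angle away from their intersection, so `‖v 0 - w‖ ≤ C ‖v 0 - v 1‖ ≤ C ∫ ‖v'‖`; together with
`‖v θ - v 0‖ ≤ ∫ ‖v'‖` this bounds `‖v - w‖` uniformly by `(1 + C) ∫ ‖v'‖`, and Cauchy–Schwarz
gives `(∫ ‖v'‖)² ≤ ∫ ‖v'‖²`, so `λ₁ = (1 + C)⁻²` works.
-/

open MeasureTheory Complex

/-- A maximal totally real subspace of `ℂⁿ`: a real subspace `W` with
`dim_ℝ W = n` and `W ∩ i·W = {0}`. -/
def IsMaxTotallyReal (n : ℕ) (W : Submodule ℝ (EuclideanSpace ℂ (Fin n))) : Prop :=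
  Module.finrank ℝ W = n ∧ ∀ x ∈ W, Complex.I • x ∈ W → x = 0

open Set intervalIntegral
open scoped NNReal

theorem Submodule.exists_norm_sub_starProjection_inf_le {𝕜 E : Type*} [RCLike 𝕜]
    [NormedAddCommGroup E] [InnerProductSpace 𝕜 E] [FiniteDimensional 𝕜 E]
    (W₀ W₁ : Submodule 𝕜 E) :
    ∃ C : ℝ≥0, ∀ x ∈ W₀, ∀ y ∈ W₁,
      ‖x - (W₀ ⊓ W₁).starProjection x‖ ≤ C * ‖x - y‖ := by
  set K := W₀ ⊓ W₁
  -- `‖f u‖` is the distance from `u` to `W₁`; `f` is injective, hence antilipschitz.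
  let f : ↥(W₀ ⊓ Kᗮ) →ₗ[𝕜] E := W₁ᗮ.starProjection.toLinearMap ∘ₗ (W₀ ⊓ Kᗮ).subtype
  have hf : LinearMap.ker f = ⊥ := by
    refine LinearMap.ker_eq_bot'.2 fun u hu => ?_
    have hu₁ : (u : E) ∈ W₁ := by
      rw [← W₁.orthogonal_orthogonal]
      exact W₁ᗮ.starProjection_apply_eq_zero_iff.1 hu
    have hu₂ : (u : E) ∈ K ⊓ Kᗮ := ⟨⟨u.2.1, hu₁⟩, u.2.2⟩
    rw [K.inf_orthogonal_eq_bot, Submodule.mem_bot] at hu₂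
    exact Subtype.ext hu₂
  obtain ⟨C, -, hC⟩ := f.exists_antilipschitzWith hf
  refine ⟨C, fun x hx y hy => ?_⟩
  have hq : x - K.starProjection x ∈ W₀ ⊓ Kᗮ :=
    ⟨W₀.sub_mem hx (K.starProjection_apply_mem x).1, K.sub_starProjection_mem_orthogonal x⟩
  have hPq : W₁ᗮ.starProjection (x - K.starProjection x) = W₁ᗮ.starProjection (x - y) := by
    have hy' : W₁ᗮ.starProjection (y - K.starProjection x) = 0 :=
      W₁ᗮ.starProjection_apply_eq_zero_iff.2 <|
        W₁.le_orthogonal_orthogonal (W₁.sub_mem hy (K.starProjection_apply_mem x).2)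
    rw [← sub_add_sub_cancel x y, map_add, hy', add_zero]
  calc ‖x - K.starProjection x‖ ≤ C * ‖f ⟨_, hq⟩‖ := hC.le_mul_norm (map_zero f) ⟨_, hq⟩
    _ = C * ‖W₁ᗮ.starProjection (x - y)‖ := by rw [← hPq]; rfl
    _ ≤ C * ‖x - y‖ := by gcongr; exact W₁ᗮ.norm_starProjection_apply_le _

theorem sq_intervalIntegral_le_mul_intervalIntegral_sq {f : ℝ → ℝ} {a b : ℝ} (hab : a < b)
    (hf : IntervalIntegrable f volume a b)
    (hf2 : IntervalIntegrable (fun x => f x ^ 2) volume a b) :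
    (∫ x in a..b, f x) ^ 2 ≤ (b - a) * ∫ x in a..b, f x ^ 2 := by
  have hJensen := (even_two.convexOn_pow (𝕜 := ℝ)).map_set_average_le
    (continuous_pow 2).continuousOn isClosed_univ (μ := volume) (t := Ioc a b)
    (by simp [hab]) (by simp) (.of_forall fun _ => mem_univ _) hf.1 hf2.1
  have hba : 0 < b - a := sub_pos.2 hab
  simp only [setAverage_eq, Real.volume_real_Ioc_of_le hab.le, smul_eq_mul] at hJensen
  rw [mul_pow, inv_pow, inv_mul_le_iff₀ (by positivity), ← mul_assoc, sq (b - a),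
    mul_assoc (b - a), mul_inv_cancel₀ hba.ne', mul_one] at hJensen
  rwa [integral_of_le hab.le, integral_of_le hab.le]

section Calculus

variable {F : Type*} [NormedAddCommGroup F] [NormedSpace ℝ F] [CompleteSpace F]
  {v : ℝ → F} {a b : ℝ}

theorem norm_sub_le_integral_norm_derivWithin (hab : a < b) (hv : ContDiffOn ℝ 1 v (Icc a b))
    {t : ℝ} (ht : t ∈ Icc a b) :
    ‖v t - v a‖ ≤ ∫ x in a..b, ‖derivWithin v (Icc a b) x‖ := by
  have hFTC : ∫ x in a..t, deriv v x = v t - v a :=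
    integral_deriv_of_contDiffOn_Icc (hv.mono (Icc_subset_Icc_right ht.2)) ht.1
  have hderiv : ContinuousOn (fun x => ‖derivWithin v (Icc a b) x‖) (Icc a b) :=
    (hv.continuousOn_derivWithin (uniqueDiffOn_Icc hab) le_rfl).norm
  calc ‖v t - v a‖ ≤ ∫ x in a..t, ‖deriv v x‖ := hFTC ▸ norm_integral_le_integral_norm ht.1
    _ = ∫ x in a..t, ‖derivWithin v (Icc a b) x‖ := by
        refine integral_congr_ae ?_
        filter_upwards [Measure.ae_ne volume t] with x hxt hx
        rw [uIoc_of_le ht.1] at hx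
        rw [derivWithin_of_mem_nhds (Icc_mem_nhds hx.1 (lt_of_le_of_ne hx.2 hxt |>.trans_le ht.2))]
    _ ≤ ∫ x in a..b, ‖derivWithin v (Icc a b) x‖ :=
        integral_mono_interval le_rfl ht.1 ht.2 (.of_forall fun _ => norm_nonneg _)
          (hderiv.intervalIntegrable_of_Icc hab.le)

theorem integral_norm_sub_sq_le_of_norm_sub_le (hab : a < b) (hv : ContDiffOn ℝ 1 v (Icc a b))
    {w : F} {C : ℝ} (hC : 0 ≤ C)
    (hw : ‖v a - w‖ ≤ C * ∫ x in a..b, ‖derivWithin v (Icc a b) x‖) :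
    ∫ x in a..b, ‖v x - w‖ ^ 2 ≤
      ((1 + C) * (b - a)) ^ 2 * ∫ x in a..b, ‖derivWithin v (Icc a b) x‖ ^ 2 := by
  set A := ∫ x in a..b, ‖derivWithin v (Icc a b) x‖
  have hderiv : ContinuousOn (fun x => ‖derivWithin v (Icc a b) x‖) (Icc a b) :=
    (hv.continuousOn_derivWithin (uniqueDiffOn_Icc hab) le_rfl).norm
  have hpointwise : ∀ x ∈ Icc a b, ‖v x - w‖ ≤ (1 + C) * A := fun x hx =>
    calc ‖v x - w‖ ≤ ‖v x - v a‖ + ‖v a - w‖ := norm_sub_le_norm_sub_add_norm_sub _ _ _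
      _ ≤ A + C * A := add_le_add (norm_sub_le_integral_norm_derivWithin hab hv hx) hw
      _ = (1 + C) * A := by ring
  have hL : ∫ x in a..b, ‖v x - w‖ ^ 2 ≤ (b - a) * ((1 + C) * A) ^ 2 := by
    have hint : IntervalIntegrable (fun x => ‖v x - w‖ ^ 2) volume a b :=
      ((hv.continuousOn.sub continuousOn_const).norm.pow 2).intervalIntegrable_of_Icc hab.le
    simpa using integral_mono_on hab.le hint intervalIntegrable_const
      fun x hx => pow_le_pow_left₀ (norm_nonneg _) (hpointwise x hx) 2
  have hR : A ^ 2 ≤ (b - a) * ∫ x in a..b, ‖derivWithin v (Icc a b) x‖ ^ 2 :=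
    sq_intervalIntegral_le_mul_intervalIntegral_sq hab (hderiv.intervalIntegrable_of_Icc hab.le)
      ((hderiv.pow 2).intervalIntegrable_of_Icc hab.le)
  calc ∫ x in a..b, ‖v x - w‖ ^ 2 ≤ (b - a) * (1 + C) ^ 2 * A ^ 2 := by linarith
    _ ≤ (b - a) * (1 + C) ^ 2 * ((b - a) * ∫ x in a..b, ‖derivWithin v (Icc a b) x‖ ^ 2) := by
        gcongr
    _ = ((1 + C) * (b - a)) ^ 2 * ∫ x in a..b, ‖derivWithin v (Icc a b) x‖ ^ 2 := by ring

end Calculus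

theorem stmt9_general (n : ℕ) (W₀ W₁ : Submodule ℝ (EuclideanSpace ℂ (Fin n))) :
    ∃ lam > (0 : ℝ), ∀ v : ℝ → EuclideanSpace ℂ (Fin n),
      ContDiffOn ℝ 1 v (Set.Icc 0 1) → v 0 ∈ W₀ → v 1 ∈ W₁ →
      ∃ w, w ∈ W₀ ∧ w ∈ W₁ ∧
        lam * ∫ θ in (0:ℝ)..1, ‖v θ - w‖ ^ 2 ≤
          ∫ θ in (0:ℝ)..1, ‖derivWithin v (Set.Icc 0 1) θ‖ ^ 2 := by
  obtain ⟨C, hC⟩ := Submodule.exists_norm_sub_starProjection_inf_le W₀ W₁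
  refine ⟨((1 + C : ℝ) ^ 2)⁻¹, by positivity, fun v hv hv0 hv1 => ?_⟩
  have hw : (W₀ ⊓ W₁).starProjection (v 0) ∈ W₀ ⊓ W₁ := (W₀ ⊓ W₁).starProjection_apply_mem _
  refine ⟨_, hw.1, hw.2, ?_⟩
  have hend : ‖v 0 - (W₀ ⊓ W₁).starProjection (v 0)‖ ≤
      C * ∫ θ in (0:ℝ)..1, ‖derivWithin v (Icc 0 1) θ‖ := by
    refine (hC _ hv0 _ hv1).trans (mul_le_mul_of_nonneg_left ?_ C.2)
    rw [norm_sub_rev]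
    exact norm_sub_le_integral_norm_derivWithin zero_lt_one hv (right_mem_Icc.2 zero_le_one)
  rw [inv_mul_le_iff₀ (by positivity)]
  simpa using integral_norm_sub_sq_le_of_norm_sub_le zero_lt_one hv C.2 hend

/-- the spectral gap (Poincaré-type inequality) for paths with
endpoints on two maximal totally real subspaces: there is `λ₁ > 0` so that every
`C¹` path `v : [0,1] → ℂⁿ` with `v 0 ∈ W₀`, `v 1 ∈ W₁` satisfies
`λ₁ ∫₀¹ ‖v - w‖² ≤ ∫₀¹ ‖v'‖²` for some `w ∈ W₀ ∩ W₁`. -/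
theorem stmt9 (n : ℕ) (hn : 1 ≤ n) (W₀ W₁ : Submodule ℝ (EuclideanSpace ℂ (Fin n)))
    (h0 : IsMaxTotallyReal n W₀) (h1 : IsMaxTotallyReal n W₁) :
    ∃ lam > (0 : ℝ), ∀ v : ℝ → EuclideanSpace ℂ (Fin n),
      ContDiffOn ℝ 1 v (Set.Icc 0 1) → v 0 ∈ W₀ → v 1 ∈ W₁ →
      ∃ w, w ∈ W₀ ∧ w ∈ W₁ ∧
        lam * ∫ θ in (0:ℝ)..1, ‖v θ - w‖ ^ 2 ≤
          ∫ θ in (0:ℝ)..1, ‖derivWithin v (Set.Icc 0 1) θ‖ ^ 2 :=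
  stmt9_general n W₀ W₁
end

section
/- For every real number α > 0 and all real numbers a, b, setting g(t) := a·e^{αt} + b·e^{−αt}, one has ∫₁² g(t)² dt ≤ (1/(1 + cosh(2α))) · (∫₀¹ g(t)² dt + ∫₂³ g(t)² dt). -/
/-!
Write `g = a e^{αt} + b e^{-αt}` and `h = a e^{αt} - b e^{-αt}`, so `g² - h² = 4ab` is constant.
Since `e^{±2αt}` satisfy `u(t - r) + u(t + r) = 2 cosh(2αr) u(t)`, the square `g²` obeys the pointwise identity
`g(t - r)² + g(t + r)² = (1 + cosh 2αr) g(t)² + (cosh 2αr - 1) h(t)²`.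
Integrating it over `[x, y]` and dropping the nonnegative `h²` term gives the three-interval estimate.
-/

open Real intervalIntegral

noncomputable def expMode (α a b t : ℝ) : ℝ := a * exp (α * t) + b * exp (-(α * t))

theorem continuous_expMode (α a b : ℝ) : Continuous (expMode α a b) := by
  unfold expMode
  fun_prop

theorem expMode_sq_sub_add_sq_add (α a b r t : ℝ) :
    expMode α a b (t - r) ^ 2 + expMode α a b (t + r) ^ 2 =
      (1 + cosh (2 * α * r)) * expMode α a b t ^ 2 +
        (cosh (2 * α * r) - 1) * expMode α a (-b) t ^ 2 := by
  have hcosh : cosh (2 * α * r) = ((exp (α * r)) ^ 2 + (exp (-(α * r))) ^ 2) / 2 := by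
    rw [cosh_eq, ← exp_nat_mul, ← exp_nat_mul]
    ring_nf
  simp only [expMode, hcosh, mul_sub, mul_add, neg_sub, neg_add, exp_add, exp_sub, exp_neg]
  field_simp
  ring

theorem integral_expMode_sq_sub_add_integral_expMode_sq_add (α a b r x y : ℝ) :
    (∫ t in (x - r)..(y - r), expMode α a b t ^ 2) + ∫ t in (x + r)..(y + r), expMode α a b t ^ 2 =
      (1 + cosh (2 * α * r)) * (∫ t in x..y, expMode α a b t ^ 2) +
        (cosh (2 * α * r) - 1) * ∫ t in x..y, expMode α a (-b) t ^ 2 := by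
  have hg := continuous_expMode α a b
  have hh := continuous_expMode α a (-b)
  rw [← integral_comp_sub_right, ← integral_comp_add_right, ← integral_add, ← integral_const_mul,
    ← integral_const_mul, ← integral_add]
  · simp_rw [expMode_sq_sub_add_sq_add]
  all_goals exact Continuous.intervalIntegrable (by fun_prop) _ _

theorem mul_integral_expMode_sq_le (α a b r : ℝ) {x y : ℝ} (hxy : x ≤ y) :
    (1 + cosh (2 * α * r)) * (∫ t in x..y, expMode α a b t ^ 2) ≤
      (∫ t in (x - r)..(y - r), expMode α a b t ^ 2) + ∫ t in (x + r)..(y + r), expMode α a b t ^ 2 := by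
  rw [integral_expMode_sq_sub_add_integral_expMode_sq_add]
  have : 0 ≤ (cosh (2 * α * r) - 1) * ∫ t in x..y, expMode α a (-b) t ^ 2 :=
    mul_nonneg (sub_nonneg.2 (one_le_cosh _)) (integral_nonneg hxy fun _ _ => sq_nonneg _)
  linarith

theorem stmt10_general (α : ℝ) (a b : ℝ) :
    (∫ t in (1:ℝ)..2, (a * Real.exp (α * t) + b * Real.exp (-(α * t))) ^ 2) ≤
      1 / (1 + Real.cosh (2 * α)) *
        ((∫ t in (0:ℝ)..1, (a * Real.exp (α * t) + b * Real.exp (-(α * t))) ^ 2) +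
          ∫ t in (2:ℝ)..3, (a * Real.exp (α * t) + b * Real.exp (-(α * t))) ^ 2) := by
  have h := mul_integral_expMode_sq_le α a b 1 one_le_two
  norm_num at h
  rw [one_div_mul_eq_div, le_div_iff₀' (by positivity)]
  exact h

/-- inequality (5.5): for `α > 0` and `g(t) = a e^{αt} + b e^{-αt}`,
`∫₁² g² ≤ (1/(1 + cosh 2α)) (∫₀¹ g² + ∫₂³ g²)`. -/
theorem stmt10 (α : ℝ) (hα : 0 < α) (a b : ℝ) :
    (∫ t in (1:ℝ)..2, (a * Real.exp (α * t) + b * Real.exp (-(α * t))) ^ 2) ≤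
      1 / (1 + Real.cosh (2 * α)) *
        ((∫ t in (0:ℝ)..1, (a * Real.exp (α * t) + b * Real.exp (-(α * t))) ^ 2) +
          ∫ t in (2:ℝ)..3, (a * Real.exp (α * t) + b * Real.exp (-(α * t))) ^ 2) :=
  stmt10_general α a b
end

section
/- Let α ∈ (0,1) and define u(z) := exp(α · Log z) on D := {z ∈ ℂ : 0 < |z| < 1, Im z ≥ 0}, where Log is the principal branch of the logarithm. Then u is continuous on D and holomorphic on the open upper half-disk, u maps (0,1) into the real line ℝ ⊆ ℂ and (−1,0) into the rotated line e^{iαπ}·ℝ, and for every p ∈ [1,∞): ∫_{{|z| < 1, Im z > 0}} |u′(z)|^p dA(z) < ∞ if and only if p < 2/(1−α). -/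
/-!
On the slit plane `u(z) = exp (α Log z) = z ^ α` has `u' = u · α / z`, so
`|u'(z)| = α |z| ^ (α - 1)`. In polar coordinates the open upper half-disk is
`(0, 1) × (0, π)`, hence `∫ |u'| ^ p dA = π α ^ p ∫₀¹ r ^ (1 + (α - 1) p) dr`, which is finite
iff `1 + (α - 1) p > -1`, i.e. `p < 2 / (1 - α)`. On the negative axis the principal argument
is `π`, which produces the factor `e ^ (i α π)`.
-/

open MeasureTheory Complex ENNReal Set

lemma ENNReal.const_mul_lt_top_iff {a b : ℝ≥0∞} (ha0 : a ≠ 0) (ha : a ≠ ∞) :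
    a * b < ∞ ↔ b < ∞ := by
  simp [lt_top_iff_ne_top, ENNReal.mul_eq_top, ha0, ha]

lemma lintegral_Ioo_zero_one_ofReal_rpow_lt_top_iff {t : ℝ} :
    ∫⁻ r in Ioo 0 1, ENNReal.ofReal (r ^ t) < ∞ ↔ -1 < t := by
  rw [lt_top_iff_ne_top, lintegral_ofReal_ne_top_iff_integrable, ← IntegrableOn,
    intervalIntegral.integrableOn_Ioo_rpow_iff one_pos]
  · exact (measurable_id.pow_const t).aestronglyMeasurable
  · filter_upwards [ae_restrict_mem measurableSet_Ioo] with r hr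
    exact Real.rpow_nonneg hr.1.le t

lemma hasDerivAt_exp_mul_log (a : ℂ) {z : ℂ} (hz : z ∈ slitPlane) :
    HasDerivAt (fun z => exp (a * Complex.log z)) (exp (a * Complex.log z) * (a * z⁻¹)) z :=
  ((hasDerivAt_log hz).const_mul a).cexp

lemma norm_exp_ofReal_mul_log (α : ℝ) {z : ℂ} (hz : z ≠ 0) :
    ‖exp (α * Complex.log z)‖ = ‖z‖ ^ α := by
  rw [mul_comm, ← cpow_def_of_ne_zero hz, norm_cpow_real]

lemma norm_deriv_exp_ofReal_mul_log {α : ℝ} (hα : 0 ≤ α) {z : ℂ} (hz : z ∈ slitPlane) :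
    ‖deriv (fun z => exp (α * Complex.log z)) z‖ = α * ‖z‖ ^ (α - 1) := by
  have hz0 : z ≠ 0 := slitPlane_ne_zero hz
  rw [(hasDerivAt_exp_mul_log _ hz).deriv, norm_mul, norm_exp_ofReal_mul_log α hz0, norm_mul,
    norm_inv, norm_real, Real.norm_of_nonneg hα, Real.rpow_sub_one (norm_ne_zero_iff.2 hz0)]
  ring

lemma continuousOn_log_of_im_nonneg : ContinuousOn Complex.log {z : ℂ | z ≠ 0 ∧ 0 ≤ z.im} := by
  rintro z ⟨hz, -⟩
  by_cases hsp : z ∈ slitPlane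
  · exact (continuousAt_clog hsp).continuousWithinAt
  · obtain ⟨hre, him⟩ : z.re ≤ 0 ∧ z.im = 0 := by simpa [mem_slitPlane_iff] using hsp
    have hre : z.re < 0 := hre.lt_of_ne fun h => hz (Complex.ext h him)
    exact (continuousWithinAt_log_of_re_neg_of_im_zero hre him).mono fun w hw => hw.2

lemma exp_ofReal_mul_log_ofReal_of_pos (α : ℝ) {x : ℝ} (hx : 0 < x) :
    exp (α * Complex.log x) = ((x ^ α : ℝ) : ℂ) := by
  rw [ofReal_cpow hx.le, cpow_def_of_ne_zero (ofReal_ne_zero.2 hx.ne'), mul_comm]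

lemma exp_ofReal_mul_log_ofReal_of_neg (α : ℝ) {x : ℝ} (hx : x < 0) :
    exp (α * Complex.log x) = exp (α * Real.pi * I) * (((-x) ^ α : ℝ) : ℂ) := by
  rw [mul_comm, ← cpow_def_of_ne_zero (ofReal_ne_zero.2 hx.ne), ofReal_cpow_of_nonpos hx.le,
    ofReal_cpow (neg_nonneg.2 hx.le), mul_comm, ofReal_neg]
  ring_nf

def upperHalfDisk : Set ℂ := {z | ‖z‖ < 1 ∧ 0 < z.im}

lemma measurableSet_upperHalfDisk : MeasurableSet upperHalfDisk :=
  ((isOpen_lt continuous_norm continuous_const).inter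
    (isOpen_lt continuous_const continuous_im)).measurableSet

lemma polarCoord_symm_mem_upperHalfDisk_iff {p : ℝ × ℝ} (hp : p ∈ polarCoord.target) :
    Complex.polarCoord.symm p ∈ upperHalfDisk ↔ p ∈ Ioo 0 1 ×ˢ Ioo 0 Real.pi := by
  obtain ⟨hr : 0 < p.1, hθ, hθ'⟩ := hp
  have him : (Complex.polarCoord.symm p).im = p.1 * Real.sin p.2 := by simp [sin_ofReal_re]
  simp only [upperHalfDisk, mem_ofPred_eq, norm_polarCoord_symm, abs_of_pos hr, him,
    mul_pos_iff_of_pos_left hr, mem_prod, mem_Ioo, hr, hθ', true_and, and_true]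
  refine and_congr_right fun _ => ⟨fun h => ?_, fun h => Real.sin_pos_of_pos_of_lt_pi h hθ'⟩
  by_contra! h'
  exact (Real.sin_nonpos_of_nonpos_of_neg_pi_le h' hθ.le).not_gt h

lemma lintegral_upperHalfDisk_comp_norm {g : ℝ → ℝ≥0∞} (hg : Measurable g) :
    ∫⁻ z in upperHalfDisk, g ‖z‖ =
      ENNReal.ofReal Real.pi * ∫⁻ r in Ioo 0 1, ENNReal.ofReal r * g r := by
  have hS : MeasurableSet (Ioo (0 : ℝ) 1 ×ˢ Ioo 0 Real.pi) :=
    measurableSet_Ioo.prod measurableSet_Ioo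
  have hS_target : Ioo (0 : ℝ) 1 ×ˢ Ioo 0 Real.pi ⊆ polarCoord.target := by
    rintro ⟨r, θ⟩ ⟨⟨hr, -⟩, hθ, hθ'⟩
    exact ⟨hr, by linarith [Real.pi_pos], hθ'⟩
  rw [← lintegral_indicator measurableSet_upperHalfDisk, ← Complex.lintegral_comp_polarCoord_symm,
    setLIntegral_congr_fun polarCoord.open_target.measurableSet
      (g := (Ioo 0 1 ×ˢ Ioo 0 Real.pi).indicator fun p => ENNReal.ofReal p.1 * g p.1),
    setLIntegral_indicator hS, inter_eq_left.2 hS_target, Measure.volume_eq_prod,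
    setLIntegral_prod _ (by fun_prop)]
  · simp_rw [setLIntegral_const, Real.volume_Ioo, sub_zero]
    rw [lintegral_mul_const' _ _ ofReal_ne_top, mul_comm]
  · intro p hp
    simp only [indicator, polarCoord_symm_mem_upperHalfDisk_iff hp, norm_polarCoord_symm,
      abs_of_pos (show 0 < p.1 from hp.1), smul_eq_mul]
    split_ifs <;> simp

lemma lintegral_upperHalfDisk_ofReal_norm_rpow_lt_top_iff (s : ℝ) :
    ∫⁻ z in upperHalfDisk, ENNReal.ofReal (‖z‖ ^ s) < ∞ ↔ -2 < s := by
  have hpolar : ∀ r ∈ Ioo (0 : ℝ) 1,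
      ENNReal.ofReal r * ENNReal.ofReal (r ^ s) = ENNReal.ofReal (r ^ (s + 1)) := fun r hr => by
    rw [← ENNReal.ofReal_mul hr.1.le, Real.rpow_add_one hr.1.ne', mul_comm]
  rw [lintegral_upperHalfDisk_comp_norm (g := fun r => ENNReal.ofReal (r ^ s)) (by fun_prop),
    setLIntegral_congr_fun measurableSet_Ioo hpolar,
    ENNReal.const_mul_lt_top_iff (by simp [Real.pi_pos]) ofReal_ne_top,
    lintegral_Ioo_zero_one_ofReal_rpow_lt_top_iff]
  constructor <;> intro <;> linarith

lemma lintegral_upperHalfDisk_nnnorm_deriv_rpow_lt_top_iff {α : ℝ} (hα0 : 0 < α) (hα1 : α < 1)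
    (p : ℝ) :
    ∫⁻ z in upperHalfDisk, (‖deriv (fun z => exp (α * Complex.log z)) z‖₊ : ℝ≥0∞) ^ p < ∞ ↔
      p < 2 / (1 - α) := by
  have hintegrand : ∀ z ∈ upperHalfDisk,
      (‖deriv (fun z => exp (α * Complex.log z)) z‖₊ : ℝ≥0∞) ^ p =
        ENNReal.ofReal (α ^ p) * ENNReal.ofReal (‖z‖ ^ ((α - 1) * p)) := fun z hz => by
    have hz : z ∈ slitPlane := Or.inr hz.2.ne'
    have hz0 : 0 < ‖z‖ := norm_pos_iff.2 (slitPlane_ne_zero hz)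
    rw [← enorm_eq_nnnorm, ← ofReal_norm, norm_deriv_exp_ofReal_mul_log hα0.le hz,
      ENNReal.ofReal_rpow_of_pos (by positivity), Real.mul_rpow hα0.le (by positivity),
      ← Real.rpow_mul hz0.le, ENNReal.ofReal_mul (by positivity)]
  rw [setLIntegral_congr_fun measurableSet_upperHalfDisk hintegrand,
    lintegral_const_mul' _ _ ofReal_ne_top,
    ENNReal.const_mul_lt_top_iff (by simp [Real.rpow_pos_of_pos hα0]) ofReal_ne_top,
    lintegral_upperHalfDisk_ofReal_norm_rpow_lt_top_iff, lt_div_iff₀ (sub_pos.2 hα1)]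
  constructor <;> intro <;> linarith

/-- the example `u(z) = z^α = exp(α Log z)`, `0 < α < 1`, on the
punctured closed upper half-disk: it is continuous there, holomorphic on the open
upper half-disk, maps `(0,1)` into `ℝ` and `(-1,0)` into `e^{iαπ}ℝ`, and its
derivative is `L^p` on the open upper half-disk iff `p < 2/(1-α)`. -/
theorem stmt14 (α : ℝ) (hα0 : 0 < α) (hα1 : α < 1) :
    ContinuousOn (fun z : ℂ => Complex.exp ((α : ℂ) * Complex.log z))
      {z : ℂ | 0 < ‖z‖ ∧ ‖z‖ < 1 ∧ 0 ≤ z.im} ∧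
    DifferentiableOn ℂ (fun z : ℂ => Complex.exp ((α : ℂ) * Complex.log z))
      {z : ℂ | ‖z‖ < 1 ∧ 0 < z.im} ∧
    (∀ x : ℝ, 0 < x → x < 1 →
      ∃ r : ℝ, Complex.exp ((α : ℂ) * Complex.log (x : ℂ)) = (r : ℂ)) ∧
    (∀ x : ℝ, -1 < x → x < 0 →
      ∃ r : ℝ, Complex.exp ((α : ℂ) * Complex.log (x : ℂ)) =
        Complex.exp ((α : ℂ) * (Real.pi : ℂ) * Complex.I) * (r : ℂ)) ∧
    (∀ p : ℝ, 1 ≤ p →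
      ((∫⁻ z in {z : ℂ | ‖z‖ < 1 ∧ 0 < z.im},
          (‖deriv (fun z : ℂ => Complex.exp ((α : ℂ) * Complex.log z)) z‖₊ : ℝ≥0∞) ^ p) < ⊤
        ↔ p < 2 / (1 - α))) := by
  refine ⟨?_, fun z hz => ?_, fun x hx _ => ⟨x ^ α, exp_ofReal_mul_log_ofReal_of_pos α hx⟩,
    fun x _ hx => ⟨(-x) ^ α, exp_ofReal_mul_log_ofReal_of_neg α hx⟩,
    fun p _ => lintegral_upperHalfDisk_nnnorm_deriv_rpow_lt_top_iff hα0 hα1 p⟩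
  · exact (continuous_exp.comp_continuousOn
      (continuousOn_const.mul continuousOn_log_of_im_nonneg)).mono
        fun z hz => ⟨norm_pos_iff.1 hz.1, hz.2.2⟩
  · exact (hasDerivAt_exp_mul_log _ (Or.inr hz.2.ne')).differentiableAt.differentiableWithinAt
end
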